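/- arXiv:1608.05178 — 9 statements merged into one kernel-verified Lean document; each statement's English description precedes it below -/
import Mathlib

section
/- Let A be an additive abelian group and φ ∈ Aut(A) a fixed-point free involution (φ² = id and φ(a)=a implies a=0). Then the map S sending a ∈ Alex(A,φ) to the inner automorphism S_a is an injective quandle homomorphism from Alex(A,φ) into the conjugation quandle Conj(Inn(Alex(A,φ))). -/
/-- The Alexander quandle operation on an additive abelian group `A`:
`a * b = φ a + b - φ b`. -/
def aop {A : Type*} [AddCommGroup A] (φ : A ≃+ A) (a b : A) : A := φ a + b - φ b

/-- The inner automorphism `S_a : b ↦ b * a = φ b + a - φ a` of `Alex(A, φ)`,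
as a permutation of `A`. -/
def S {A : Type*} [AddCommGroup A] (φ : A ≃+ A) (a : A) : Equiv.Perm A where
  toFun b := aop φ b a
  invFun b := φ.symm (b - a + φ a)
  left_inv b := by
    show φ.symm (aop φ b a - a + φ a) = b
    rw [show aop φ b a - a + φ a = φ b from by simp [aop]; abel, AddEquiv.symm_apply_apply]
  right_inv b := by
    show aop φ (φ.symm (b - a + φ a)) a = b
    rw [aop, AddEquiv.apply_symm_apply]; abel

/-- The inner automorphism group of `Alex(A, φ)`, generated by the `S_a`. -/
def InnAlex {A : Type*} [AddCommGroup A] (φ : A ≃+ A) : Subgroup (Equiv.Perm A) :=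
  Subgroup.closure (Set.range (S φ))

/-- The map `a ↦ S_a`, viewed as a map `Alex(A, φ) → Inn(Alex(A, φ))`. -/
def SInn {A : Type*} [AddCommGroup A] (φ : A ≃+ A) (a : A) : InnAlex φ :=
  ⟨S φ a, Subgroup.subset_closure (Set.mem_range_self a)⟩

/-- If `φ` is a fixed-point free involution, then `a ↦ S_a` is an injective
quandle homomorphism from `Alex(A, φ)` to the conjugation quandle
`Conj(Inn(Alex(A, φ)))` (whose operation is `x * y = y⁻¹ x y`). -/
theorem embed_in_conj {A : Type*} [AddCommGroup A] (φ : A ≃+ A)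
    (hinv : ∀ a : A, φ (φ a) = a) (hfpf : ∀ a : A, φ a = a → a = 0) :
    Function.Injective (SInn φ) ∧
    ∀ a b : A, SInn φ (aop φ a b) = (SInn φ b)⁻¹ * SInn φ a * SInn φ b := by
  have hsymm : ∀ y : A, φ.symm y = φ y := fun y => by
    conv_lhs => rw [← hinv y]
    exact φ.symm_apply_apply (φ y)
  constructor
  · intro a b hab
    have h1 : S φ a = S φ b := congrArg Subtype.val hab
    have h2 : aop φ 0 a = aop φ 0 b := congrFun (congrArg Equiv.toFun h1) 0
    simp only [aop, map_zero, zero_add] at h2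
    have h3 : φ (a - b) = a - b := by
      rw [map_sub, ← sub_eq_sub_iff_sub_eq_sub.mp h2]
    have := hfpf _ h3
    exact sub_eq_zero.mp this
  · intro a b
    apply Subtype.ext
    show S φ (aop φ a b) = (S φ b)⁻¹ * S φ a * S φ b
    ext x
    show aop φ x (aop φ a b) = φ.symm (aop φ (aop φ x b) a - b + φ b)
    simp only [aop, hsymm, map_add, map_sub, hinv]
    abel
end

section
/- Let G be a group and φ ∈ Aut(G). Every f ∈ Aut(G) commuting with φ is a quandle automorphism of Alex(G,φ), and every translation t_a(b) = ba by a central element a ∈ Z(G) is a quandle automorphism of Alex(G,φ). Moreover the map (a,f) ↦ t_a ∘ f is an injective group homomorphism from the semidirect product Z(G) ⋊ C_{Aut(G)}(φ) into Aut(Alex(G,φ)). -/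
/-- The generalized Alexander quandle operation `a * b = φ(a b⁻¹) b` on a group `G`. -/
def qop {G : Type*} [Group G] (φ : G ≃* G) (a b : G) : G := φ (a * b⁻¹) * b

/-- The permutation `t_a ∘ f : b ↦ f(b) * a` of `G`. -/
def tphi {G : Type*} [Group G] (a : G) (f : MulAut G) : Equiv.Perm G :=
  f.toEquiv.trans (Equiv.mulRight a)

/-- Automorphisms commuting with `φ` and translations by central elements are quandle
automorphisms of `Alex(G, φ)`, and `(a, f) ↦ t_a ∘ f` is an injective group homomorphism
from the semidirect product `Z(G) ⋊ C_{Aut(G)}(φ)` into `Aut(Alex(G, φ))`. -/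
theorem semidirect_embeds_in_aut {G : Type*} [Group G] (φ : G ≃* G) :
    (∀ f : MulAut G, f * φ = φ * f → ∀ a b : G, f (qop φ a b) = qop φ (f a) (f b)) ∧
    (∀ a ∈ Subgroup.center G, ∀ b c : G, qop φ (b * a) (c * a) = qop φ b c * a) ∧
    (∀ a₁ a₂ : G, a₁ ∈ Subgroup.center G → a₂ ∈ Subgroup.center G →
      ∀ f₁ f₂ : MulAut G, f₁ * φ = φ * f₁ → f₂ * φ = φ * f₂ →
        tphi (a₁ * f₁ a₂) (f₁ * f₂) = tphi a₁ f₁ * tphi a₂ f₂) ∧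
    (∀ a₁ a₂ : G, a₁ ∈ Subgroup.center G → a₂ ∈ Subgroup.center G →
      ∀ f₁ f₂ : MulAut G, f₁ * φ = φ * f₁ → f₂ * φ = φ * f₂ →
        tphi a₁ f₁ = tphi a₂ f₂ → a₁ = a₂ ∧ f₁ = f₂) := by
  refine ⟨?_, ?_, ?_, ?_⟩
  · intro f hf a b
    have h : ∀ x, f (φ x) = φ (f x) := fun x =>
      congrArg (fun g : MulAut G => g x) hf
    simp [qop, map_mul, map_inv, h]
  · intro a ha b c
    have ha' := Subgroup.mem_center_iff.mp ha
    simp only [qop, mul_inv_rev]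
    rw [mul_assoc b a, mul_inv_cancel_left, mul_assoc]
  · intro a₁ a₂ ha₁ ha₂ f₁ f₂ hf₁ hf₂
    have ha₁' := Subgroup.mem_center_iff.mp ha₁
    ext b
    show f₁ (f₂ b) * (a₁ * f₁ a₂) = f₁ (f₂ b * a₂) * a₁
    rw [map_mul, mul_assoc, ha₁' (f₁ a₂), ← mul_assoc]
  · intro a₁ a₂ ha₁ ha₂ f₁ f₂ hf₁ hf₂ h
    have h1 : ∀ b, f₁ b * a₁ = f₂ b * a₂ := fun b =>
      congrArg (fun p : Equiv.Perm G => p b) h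
    have ha : a₁ = a₂ := by simpa using h1 1
    refine ⟨ha, ?_⟩
    ext b
    have := h1 b
    rw [ha] at this
    exact mul_right_cancel this
end

section
/- Let G be an additive abelian group with no 2-torsion (2a = 0 implies a = 0). Then the automorphism group of the Takasaki quandle T(G) is isomorphic to the semidirect product G ⋊ Aut(G). -/
/-- The automorphism group of the Takasaki quandle `T(G)` (operation `a * b = 2b - a`),
as a subgroup of the permutation group of `G`. -/
def TAut (G : Type*) [AddCommGroup G] : Subgroup (Equiv.Perm G) where
  carrier := {f | ∀ a b : G, f (2 • b - a) = 2 • f b - f a}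
  one_mem' := by intro a b; rfl
  mul_mem' := by
    intro f g hf hg a b
    simp only [Equiv.Perm.mul_apply]
    rw [hg, hf]
  inv_mem' := by
    intro f hf a b
    apply f.injective
    rw [hf]
    simp only [Equiv.Perm.coe_inv, Equiv.apply_symm_apply]

section Aux

variable {G : Type*} [AddCommGroup G]

/-- Forward map: `(a, f) ↦ (x ↦ f x + a)` as an element of `TAut G`. -/
def takasakiF (a : G) (f : AddAut G) : TAut G :=
  ⟨(f : G ≃ G).trans (Equiv.addRight a), by
    intro x b
    simp only [Subgroup.mem_mk, Set.mem_setOf_eq, Equiv.trans_apply, Equiv.coe_addRight,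
      AddEquiv.coe_toEquiv, two_nsmul, map_sub, map_add]
    abel⟩

theorem takasakiF_apply (a : G) (f : AddAut G) (x : G) :
    ((takasakiF a f : TAut G) : Equiv.Perm G) x = f x + a := rfl

theorem taut_add (h2 : ∀ a : G, 2 • a = 0 → a = 0) (φ : Equiv.Perm G)
    (hφ : ∀ a b : G, φ (2 • b - a) = 2 • φ b - φ a) (x y : G) :
    φ (x + y) = φ x + φ y - φ 0 := by
  have e2y : φ (2 • y) = 2 • φ y - φ 0 := by simpa using hφ 0 y
  have eneg : φ (-(2 • y)) = 2 • φ 0 - φ (2 • y) := by simpa using hφ (2 • y) 0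
  have h1 : φ (2 • x + 2 • y) = 2 • φ x + 2 • φ y - 3 • φ 0 := by
    have e := hφ (-(2 • y)) x
    rw [sub_neg_eq_add] at e
    rw [e, eneg, e2y]
    abel
  have h2' : φ (2 • (x + y)) = 2 • φ (x + y) - φ 0 := by simpa using hφ 0 (x + y)
  rw [smul_add] at h2'
  have hz : 2 • (φ (x + y) - (φ x + φ y - φ 0)) = 0 := by
    have : 2 • (φ (x + y) - (φ x + φ y - φ 0)) =
        (2 • φ (x + y) - φ 0) - (2 • φ x + 2 • φ y - 3 • φ 0) := by abel
    rw [this, ← h2', ← h1, sub_self]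
  have := h2 _ hz
  rw [sub_eq_zero] at this
  exact this

/-- Backward map. -/
def takasakiFinv (h2 : ∀ a : G, 2 • a = 0 → a = 0) (φ : TAut G) : G × AddAut G :=
  ⟨(φ : Equiv.Perm G) 0,
   { toEquiv := (φ : Equiv.Perm G).trans (Equiv.subRight ((φ : Equiv.Perm G) 0))
     map_add' := by
       intro x y
       show (φ : Equiv.Perm G) (x + y) - (φ : Equiv.Perm G) 0 =
         ((φ : Equiv.Perm G) x - (φ : Equiv.Perm G) 0) +
           ((φ : Equiv.Perm G) y - (φ : Equiv.Perm G) 0)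
       rw [taut_add h2 (φ : Equiv.Perm G) φ.2 x y]
       abel }⟩

end Aux

/-- If `G` is an additive abelian group with no 2-torsion, then
`Aut(T(G)) ≅ G ⋊ Aut(G)`: there is a bijection `Ψ : G × Aut(G) ≃ Aut(T(G))`
that is multiplicative with respect to the semidirect product law
`(a₁, f₁)(a₂, f₂) = (a₁ + f₁(a₂), f₁ f₂)`. -/
theorem takasaki_aut {G : Type*} [AddCommGroup G] (h2 : ∀ a : G, 2 • a = 0 → a = 0) :
    ∃ Ψ : G × AddAut G ≃ TAut G,
      ∀ (a₁ a₂ : G) (f₁ f₂ : AddAut G),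
        Ψ (a₁ + f₁ a₂, f₁ + f₂) = Ψ (a₁, f₁) * Ψ (a₂, f₂) := by
  refine ⟨⟨fun p => takasakiF p.1 p.2, takasakiFinv h2, ?_, ?_⟩, ?_⟩
  · rintro ⟨a, f⟩
    refine Prod.ext ?_ ?_
    · show ((takasakiF a f : TAut G) : Equiv.Perm G) 0 = a
      simp [takasakiF_apply]
    · ext x
      show ((takasakiF a f : TAut G) : Equiv.Perm G) x -
          ((takasakiF a f : TAut G) : Equiv.Perm G) 0 = f x
      rw [takasakiF_apply, takasakiF_apply]
      simp
  · intro φ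
    apply Subtype.ext
    apply Equiv.ext
    intro x
    show (φ : Equiv.Perm G) x - (φ : Equiv.Perm G) 0 + (φ : Equiv.Perm G) 0
        = (φ : Equiv.Perm G) x
    abel
  · intro a₁ a₂ f₁ f₂
    apply Subtype.ext
    apply Equiv.ext
    intro x
    show (f₁ + f₂) x + (a₁ + f₁ a₂) =
      ((takasakiF a₁ f₁ : TAut G) : Equiv.Perm G)
        (((takasakiF a₂ f₂ : TAut G) : Equiv.Perm G) x)
    rw [takasakiF_apply, takasakiF_apply, map_add]
    show f₁ (f₂ x) + (a₁ + f₁ a₂) = f₁ (f₂ x) + f₁ a₂ + a₁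
    abel
end

section
/- Let G be an additive abelian group with no 2-torsion, and let f be a quandle automorphism of the Takasaki quandle T(G). Then the map h(a) = f(a) - f(0) is a group automorphism of G. -/
/-- If `G` is an additive abelian group with no 2-torsion and `f` is a quandle
automorphism of the Takasaki quandle `T(G)` (i.e. a bijection with
`f(2b - a) = 2 f(b) - f(a)`), then `a ↦ f(a) - f(0)` is a group automorphism of `G`. -/
theorem takasaki_aut_translate {G : Type*} [AddCommGroup G]
    (h2 : ∀ a : G, 2 • a = 0 → a = 0) (f : Equiv.Perm G)
    (hf : ∀ a b : G, f (2 • b - a) = 2 • f b - f a) :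
    ∃ h : G ≃+ G, ∀ a : G, h a = f a - f 0 := by
  have key : ∀ a b : G, f (a + b) - f 0 = (f a - f 0) + (f b - f 0) := by
    intro a b
    have hdbl : ∀ x : G, f (2 • x) = 2 • f x - f 0 := by
      intro x
      have := hf 0 x
      simpa using this
    have h1 : f (2 • b) = 2 • f (a + b) - f (2 • a) := by
      have := hf (2 • a) (a + b)
      have e : 2 • (a + b) - 2 • a = 2 • b := by abel
      rwa [e] at this
    have h3 : 2 • (f (a + b) - f 0 - ((f a - f 0) + (f b - f 0))) = 0 := by
      have hb := hdbl b
      have ha := hdbl a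
      rw [h1, ha] at hb
      have : 2 • f (a + b) - (2 • f a - f 0) = 2 • f b - f 0 := hb
      rw [smul_sub, smul_sub, smul_add, smul_sub, smul_sub]
      abel_nf
      abel_nf at this
      linear_combination (norm := abel_nf) this
    have := h2 _ h3
    have := sub_eq_zero.mp this
    exact this
  refine ⟨AddEquiv.mk' (f.trans (Equiv.subRight (f 0))) ?_, fun a => rfl⟩
  intro a b
  simpa using key a b
end

section
/- Let G be a group with center Z(G). Then the map (a,f) ↦ t_a ∘ f, where t_a(b) = ba, is an injective group homomorphism from Z(G) ⋊ Aut(G) into Aut(Conj(G)). -/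
/-- The automorphism group of the conjugation quandle `Conj(G)`
(operation `a * b = b⁻¹ a b`), as a subgroup of the permutation group of `G`. -/
def ConjAut (G : Type*) [Group G] : Subgroup (Equiv.Perm G) where
  carrier := {f | ∀ a b : G, f (b⁻¹ * a * b) = (f b)⁻¹ * f a * f b}
  one_mem' := by intro a b; rfl
  mul_mem' := by
    intro f g hf hg a b
    simp only [Equiv.Perm.mul_apply]
    rw [hg, hf]
  inv_mem' := by
    intro f hf a b
    apply f.injective
    rw [Equiv.Perm.inv_def, Equiv.apply_symm_apply, hf]
    simp only [Equiv.apply_symm_apply]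

/-- The map `(a, f) ↦ t_a ∘ f` is an injective group homomorphism from the semidirect
product `Z(G) ⋊ Aut(G)` into `Aut(Conj(G))`. -/
theorem center_holomorph_embeds (G : Type*) [Group G] :
    (∀ a ∈ Subgroup.center G, ∀ f : MulAut G, tphi a f ∈ ConjAut G) ∧
    (∀ a₁ a₂ : G, a₁ ∈ Subgroup.center G → a₂ ∈ Subgroup.center G →
      ∀ f₁ f₂ : MulAut G, tphi (a₁ * f₁ a₂) (f₁ * f₂) = tphi a₁ f₁ * tphi a₂ f₂) ∧
    (∀ a₁ a₂ : G, a₁ ∈ Subgroup.center G → a₂ ∈ Subgroup.center G →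
      ∀ f₁ f₂ : MulAut G, tphi a₁ f₁ = tphi a₂ f₂ → a₁ = a₂ ∧ f₁ = f₂) := by
  have happ : ∀ (a : G) (f : MulAut G) (b : G), tphi a f b = f b * a := fun _ _ _ => rfl
  refine ⟨?_, ?_, ?_⟩
  · intro a ha f x b
    rw [Subgroup.mem_center_iff] at ha
    simp only [happ, map_mul, map_inv]
    rw [mul_inv_rev, ha (f x), ← mul_assoc (a⁻¹ * (f b)⁻¹) a (f x),
      mul_assoc a⁻¹ (f b)⁻¹ a, ha (f b)⁻¹, inv_mul_cancel_left, mul_assoc]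
  · intro a₁ a₂ ha₁ ha₂ f₁ f₂
    rw [Subgroup.mem_center_iff] at ha₁
    have hr : ∀ g : G, a₁ * g = g * a₁ := fun g => (ha₁ g).symm
    ext b
    simp only [happ, Equiv.Perm.mul_apply, MulAut.mul_apply, map_mul, mul_assoc, hr]
  · intro a₁ a₂ ha₁ ha₂ f₁ f₂ h
    have h1 : tphi a₁ f₁ 1 = tphi a₂ f₂ 1 := by rw [h]
    simp only [happ, map_one, one_mul] at h1
    refine ⟨h1, ?_⟩
    ext b
    have hb : tphi a₁ f₁ b = tphi a₂ f₂ b := by rw [h]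
    simp only [happ, h1] at hb
    exact mul_right_cancel hb
end

section
/- Let G be a group and φ ∈ Aut(G). If the quandle Alex(G,φ) is commutative (a*b = b*a for all a,b), then φ(a²) = a for all a ∈ G. Moreover, if G is abelian and φ(a²)=a for all a, then Alex(G,φ) is commutative. -/
/-- If `Alex(G, φ)` is commutative then `φ(a²) = a` for all `a`; conversely, if `G` is
abelian and `φ(a²) = a` for all `a`, then `Alex(G, φ)` is commutative. -/
theorem alex_commutative {G : Type*} [Group G] (φ : G ≃* G) :
    ((∀ a b : G, qop φ a b = qop φ b a) → ∀ a : G, φ (a * a) = a) ∧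
    ((∀ a b : G, a * b = b * a) → (∀ a : G, φ (a * a) = a) →
      ∀ a b : G, qop φ a b = qop φ b a) := by
  constructor
  · intro h a
    have := h a 1
    simp only [qop, inv_one, mul_one, one_mul] at this
    have h1 : φ a = (φ a)⁻¹ * a := by rw [map_inv] at this; exact this
    calc φ (a * a) = φ a * φ a := map_mul φ a a
      _ = φ a * ((φ a)⁻¹ * a) := by rw [← h1]
      _ = a := by group
  · intro hab h a b
    have hba : b * a⁻¹ = (a * b⁻¹)⁻¹ := by group
    simp only [qop, hba, map_inv]
    set x := φ (a * b⁻¹) with hxdef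
    have key : x * x = a * b⁻¹ := by rw [hxdef, ← map_mul]; exact h _
    have : x * b = x⁻¹ * (x * x) * b := by group
    rw [this, key]
    group
end

section
/- Let G be a group and φ a central automorphism of G that is fixed-point free (φ(a)=a implies a=1). Then G is abelian. -/
/-- If a group `G` admits a central automorphism (`a⁻¹ φ(a) ∈ Z(G)` for all `a`) that is
fixed-point free (`φ(a) = a → a = 1`), then `G` is abelian. -/
theorem central_fpf_abelian {G : Type*} [Group G] (φ : G ≃* G)
    (hc : ∀ a : G, a⁻¹ * φ a ∈ Subgroup.center G)
    (hfpf : ∀ a : G, φ a = a → a = 1) :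
    ∀ a b : G, a * b = b * a := by
  -- z a := a⁻¹ * φ a is a homomorphism into the center
  have hz : ∀ a b : G, (a*b)⁻¹ * φ (a*b) = (a⁻¹ * φ a) * (b⁻¹ * φ b) := by
    intro a b
    have h1 := (Subgroup.mem_center_iff.mp (hc a)) (φ b)
    have h2 := (Subgroup.mem_center_iff.mp (hc b)) b⁻¹
    calc (a*b)⁻¹ * φ (a*b) = b⁻¹ * (a⁻¹ * (φ a * φ b)) := by
          rw [map_mul]; group
      _ = b⁻¹ * ((a⁻¹ * φ a) * φ b) := by group
      _ = b⁻¹ * (φ b * (a⁻¹ * φ a)) := by rw [h1]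
      _ = (a⁻¹ * φ a) * (b⁻¹ * φ b) := by
          rw [h1, ← mul_assoc, (Subgroup.mem_center_iff.mp (hc a)) b⁻¹, mul_assoc]
  -- injectivity of z
  have hinj : ∀ a b : G, a⁻¹ * φ a = b⁻¹ * φ b → a = b := by
    intro a b h
    have key : (a * b⁻¹)⁻¹ * φ (a * b⁻¹) = 1 := by
      have hcomm : Commute b (φ b) := by
        have h := (Subgroup.mem_center_iff.mp (hc b)) b
        rw [mul_inv_cancel_left] at h
        show b * φ b = φ b * b
        conv_lhs => rw [h]
        group
      have hb : (b⁻¹)⁻¹ * φ b⁻¹ = (b⁻¹ * φ b)⁻¹ := by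
        rw [map_inv, inv_inv, mul_inv_rev, inv_inv]
        exact hcomm.inv_right
      rw [hz, hb, ← h, mul_inv_cancel]
    have : φ (a * b⁻¹) = a * b⁻¹ := by
      have := mul_eq_one_iff_inv_eq.mp key
      rw [inv_inv] at this
      exact this.symm
    have := hfpf _ this
    exact mul_inv_eq_one.mp this
  intro a b
  apply hinj
  rw [hz, hz]
  have h1 := (Subgroup.mem_center_iff.mp (hc a)) (b⁻¹ * φ b)
  rw [h1]
end

section
/- Let G be a non-trivial finite group (written additively with identity 0). Then Aut(G) acts transitively on G \ {0} if and only if G is isomorphic to (Z/pZ)ⁿ for some prime p and integer n ≥ 1. -/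
open Set

lemma exists_linearEquiv_map_of_ne_zero {K V : Type*} [Field K] [AddCommGroup V] [Module K V]
    {a b : V} (ha : a ≠ 0) (hb : b ≠ 0) : ∃ e : V ≃ₗ[K] V, e a = b := by
  have hla := LinearIndepOn.singleton (R := K) (v := id) ha
  have hlb := LinearIndepOn.singleton (R := K) (v := id) hb
  let B1 := Module.Basis.extend hla
  let B2 := Module.Basis.extend hlb
  have haM : a ∈ hla.extend (subset_univ _) := hla.subset_extend _ (mem_singleton a)
  have hbM : b ∈ hlb.extend (subset_univ _) := hlb.subset_extend _ (mem_singleton b)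
  classical
  let σ : _ ≃ _ := (B1.indexEquiv B2).trans (Equiv.swap ((B1.indexEquiv B2) ⟨a, haM⟩) ⟨b, hbM⟩)
  refine ⟨B1.equiv B2 σ, ?_⟩
  have h1 : B1 ⟨a, haM⟩ = a := Module.Basis.extend_apply_self _ _
  have h2 : B2 ⟨b, hbM⟩ = b := Module.Basis.extend_apply_self _ _
  have := B1.equiv_apply (b' := B2) ⟨a, haM⟩ σ
  rw [h1] at this
  rw [this]
  simp [σ, h2]

lemma aux1 {G : Type*} [AddCommGroup G] [Finite G] [Nontrivial G] (K : Type*) [Field K]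
    [Module K G] : ∃ n, 1 ≤ n ∧ Nonempty (G ≃+ (Fin n → K)) := by
  classical
  let B := Module.Basis.ofVectorSpace K G
  haveI : Fintype (Module.Basis.ofVectorSpaceIndex K G) := Fintype.ofFinite (Module.Basis.ofVectorSpaceIndex K G)
  let n := Fintype.card (Module.Basis.ofVectorSpaceIndex K G)
  let B' : Module.Basis (Fin n) K G := B.reindex (Fintype.equivFin _)
  refine ⟨n, ?_, ⟨B'.equivFun.toAddEquiv⟩⟩
  rcases Nat.eq_zero_or_pos n with h | h
  · exfalso
    haveI : IsEmpty (Fin n) := by rw [h]; infer_instance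
    have : Subsingleton G := B'.repr.toEquiv.subsingleton
    exact not_subsingleton G this
  · exact h


/-- For a non-trivial finite group `G` (written additively), `Aut(G)` acts transitively
on `G \ {0}` if and only if `G ≅ (ℤ/pℤ)ⁿ` for some prime `p` and `n ≥ 1`. -/
theorem aut_transitive_iff {G : Type*} [AddGroup G] [Finite G] [Nontrivial G] :
    (∀ a b : G, a ≠ 0 → b ≠ 0 → ∃ e : AddAut G, e a = b) ↔
    ∃ p n : ℕ, p.Prime ∧ 1 ≤ n ∧ Nonempty (G ≃+ (Fin n → ZMod p)) := by
  constructor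
  · intro h
    obtain ⟨g, hg⟩ := exists_ne (0 : G)
    -- all nonzero elements have the same order
    have hsame : ∀ x : G, x ≠ 0 → addOrderOf x = addOrderOf g := by
      intro x hx
      obtain ⟨e, he⟩ := h g x hg hx
      rw [← he]
      exact AddEquiv.addOrderOf_eq e g
    have hg0 : addOrderOf g ≠ 0 := (addOrderOf_pos g).ne'
    have hg1 : addOrderOf g ≠ 1 := by
      simpa [AddMonoid.addOrderOf_eq_one_iff] using hg
    obtain ⟨q, hq, hqdvd⟩ := Nat.exists_prime_and_dvd hg1
    set p := addOrderOf g with hpdef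
    -- p is prime
    have hxq : addOrderOf ((p / q) • g) = q := addOrderOf_nsmul_addOrderOf_sub hg0 hqdvd
    have hxne : (p / q) • g ≠ 0 := by
      intro h0
      rw [h0] at hxq
      simp at hxq
      exact hq.ne_one hxq.symm
    have hpq : p = q := by rw [← hsame _ hxne]; exact hxq
    have hp : p.Prime := hpq ▸ hq
    -- every element is killed by p
    have hkill : ∀ x : G, p • x = 0 := by
      intro x
      rcases eq_or_ne x 0 with rfl | hx
      · simp
      · rw [← hsame x hx]; exact addOrderOf_nsmul_eq_zero x
    -- G is commutative, using the nontrivial center of the p-group Multiplicative G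
    have hPG : IsPGroup p (Multiplicative G) := by
      intro y
      exact ⟨1, by rw [pow_one]; exact hkill y.toAdd⟩
    haveI : Fact p.Prime := ⟨hp⟩
    have hcenter := hPG.center_nontrivial
    obtain ⟨z, hz⟩ := exists_ne (1 : Subgroup.center (Multiplicative G))
    have hz0 : (z : Multiplicative G).toAdd ≠ 0 := by
      intro h0
      apply hz
      ext
      simpa [toAdd_eq_zero] using h0
    have hzc : ∀ y : G, (z : Multiplicative G).toAdd + y = y + (z : Multiplicative G).toAdd := by
      intro y
      have := (Subgroup.mem_center_iff.mp z.2) (Multiplicative.ofAdd y)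
      exact congrArg Multiplicative.toAdd this.symm
    have hcomm : ∀ x y : G, x + y = y + x := by
      intro x y
      rcases eq_or_ne x 0 with rfl | hx
      · simp
      · obtain ⟨e, he⟩ := h _ x hz0 hx
        set w := (z : Multiplicative G).toAdd
        calc x + y = e w + e (e.symm y) := by rw [he, AddEquiv.apply_symm_apply]
          _ = e (w + e.symm y) := (map_add e _ _).symm
          _ = e (e.symm y + w) := by rw [hzc]
          _ = y + x := by rw [map_add, AddEquiv.apply_symm_apply, he]
    letI : AddCommGroup G := { ‹AddGroup G› with add_comm := hcomm }
    haveI : Fact p.Prime := ⟨hp⟩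
    haveI : NeZero p := ⟨hp.pos.ne'⟩
    letI : Module (ZMod p) G := AddCommMonoid.zmodModule hkill
    obtain ⟨n, hn, he⟩ := aux1 (G := G) (ZMod p)
    exact ⟨p, n, hp, hn, he⟩
  · rintro ⟨p, n, hp, hn, ⟨e⟩⟩ a b ha hb
    haveI : Fact p.Prime := ⟨hp⟩
    have hea : e a ≠ 0 := by simpa using ha
    have heb : e b ≠ 0 := by simpa using hb
    obtain ⟨L, hL⟩ := exists_linearEquiv_map_of_ne_zero (K := ZMod p) hea heb
    refine ⟨e.trans (L.toAddEquiv.trans e.symm), ?_⟩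
    show e.symm (L.toAddEquiv (e a)) = b
    rw [show L.toAddEquiv (e a) = e b from hL, e.symm_apply_apply]
end

section
/- Let p be a prime, n ≥ 1, G = (Z/pZ)ⁿ, and let φ be multiplication by a unit u ∈ (Z/pZ)ˣ with u ≠ 1. Then Aut(Alex(G,φ)) acts doubly transitively on Alex(G,φ): for any pairs (x₁,x₂) and (y₁,y₂) of distinct elements of G there is a quandle automorphism f with f(x₁)=y₁ and f(x₂)=y₂. -/
/-- Over a field, any nonzero vector can be mapped to any other nonzero vector by a
linear automorphism. -/
lemma exists_linearEquiv_map {K V : Type*} [Field K] [AddCommGroup V] [Module K V]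
    {v w : V} (hv : v ≠ 0) (hw : w ≠ 0) : ∃ e : V ≃ₗ[K] V, e v = w := by
  classical
  have hvli : LinearIndepOn K id ({v} : Set V) :=
    linearIndependent_unique_iff.2 (by simpa using hv)
  have hwli : LinearIndepOn K id ({w} : Set V) :=
    linearIndependent_unique_iff.2 (by simpa using hw)
  let b1 := Module.Basis.extend hvli
  let b2 := Module.Basis.extend hwli
  have hvmem : v ∈ hvli.extend (Set.subset_univ _) :=
    hvli.subset_extend _ (Set.mem_singleton v)
  have hwmem : w ∈ hwli.extend (Set.subset_univ _) :=
    hwli.subset_extend _ (Set.mem_singleton w)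
  let iv : hvli.extend (Set.subset_univ _) := ⟨v, hvmem⟩
  let jw : hwli.extend (Set.subset_univ _) := ⟨w, hwmem⟩
  let e0 := b1.indexEquiv b2
  let e := e0.trans (Equiv.swap (e0 iv) jw)
  refine ⟨b1.equiv b2 e, ?_⟩
  have h1 : b1 iv = v := Module.Basis.extend_apply_self hvli iv
  have h2 : b2 jw = w := Module.Basis.extend_apply_self hwli jw
  calc b1.equiv b2 e v = b1.equiv b2 e (b1 iv) := by rw [h1]
    _ = b2 (e iv) := Module.Basis.equiv_apply b1 iv b2 e
    _ = b2 jw := by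
        congr 1
        simp [e, Equiv.swap_apply_left]
    _ = w := h2

/-- Let `G = (ℤ/pℤ)ⁿ` with `p` prime and `n ≥ 1`, and let `φ` be multiplication by a
non-trivial unit `u` of `ℤ/pℤ`. Then `Aut(Alex(G, φ))` acts doubly transitively on
`Alex(G, φ)`: for all pairs `(x₁, x₂)` and `(y₁, y₂)` of distinct elements there is a
quandle automorphism `f` of `Alex(G, φ)` (whose operation is
`a * b = φ a + b - φ b = u • a + b - u • b`) with `f x₁ = y₁` and `f x₂ = y₂`. -/
theorem alex_doubly_transitive (p n : ℕ) (hp : p.Prime) (hn : 1 ≤ n)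
    (u : (ZMod p)ˣ) (hu : u ≠ 1) :
    ∀ x₁ x₂ y₁ y₂ : Fin n → ZMod p, x₁ ≠ x₂ → y₁ ≠ y₂ →
      ∃ f : Equiv.Perm (Fin n → ZMod p),
        (∀ a b : Fin n → ZMod p,
          f ((u : ZMod p) • a + b - (u : ZMod p) • b) =
            (u : ZMod p) • f a + f b - (u : ZMod p) • f b) ∧
        f x₁ = y₁ ∧ f x₂ = y₂ := by
  haveI : Fact p.Prime := ⟨hp⟩
  intro x₁ x₂ y₁ y₂ hx hy
  have hv : x₂ - x₁ ≠ 0 := sub_ne_zero.2 hx.symm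
  have hw : y₂ - y₁ ≠ 0 := sub_ne_zero.2 hy.symm
  obtain ⟨A, hA⟩ := exists_linearEquiv_map (K := ZMod p) hv hw
  -- f x = A (x - x₁) + y₁
  refine ⟨⟨fun x => A (x - x₁) + y₁, fun x => A.symm (x - y₁) + x₁, ?_, ?_⟩, ?_, ?_, ?_⟩
  · intro x; simp
  · intro x; simp
  · intro a b
    simp only [Equiv.coe_fn_mk]
    have : ((u : ZMod p) • a + b - (u : ZMod p) • b) - x₁ =
        (u : ZMod p) • (a - x₁) + (b - x₁) - (u : ZMod p) • (b - x₁) := by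
      module
    rw [this, map_sub, map_add, map_smul, map_smul]
    module
  · simp
  · show A (x₂ - x₁) + y₁ = y₂
    rw [hA]; abel
end
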